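/- arXiv:2111.03909 — 4 statements merged into one kernel-verified Lean document; each statement's English description precedes it below -/
import Mathlib

section
/- Let p₁ ≠ p₂ be two points of ℂ with charges ε₁, ε₂ ∈ {1, −1}. The configuration (p₁, p₂; ε₁, ε₂) is balanced if and only if ε₁ = ε₂ = −1, p₂ = −p₁, and |p₁| = 1/√2. In particular, up to a rotation of the plane about the origin, the only balanced two-point configuration is p₁ = 1/√2, p₂ = −1/√2 with ε₁ = ε₂ = −1. -/
/-- The force at a point of a configuration: `F j = conj (p j) + ∑_{k ≠ j} ε k / (p j - p k)`. -/
noncomputable def force {ι : Type*} [Fintype ι] [DecidableEq ι]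
    (p ε : ι → ℂ) (j : ι) : ℂ :=
  (starRingEnd ℂ) (p j) + ∑ k ∈ Finset.univ.erase j, ε k / (p j - p k)

/-- A configuration is balanced if all forces vanish. -/
def IsBalancedConfig {ι : Type*} [Fintype ι] [DecidableEq ι] (p ε : ι → ℂ) : Prop :=
  ∀ j, force p ε j = 0


/-!
Clearing denominators, the two force equations of a configuration `(p₀, p₁)` say
`conj p₀ · (p₀ - p₁) = -ε₁` and `conj p₁ · (p₀ - p₁) = ε₀`. Their difference is
`|p₀ - p₁|² = -(ε₀ + ε₁)`, which forces both charges to be `-1`; their sum is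
`conj (p₀ + p₁) · (p₀ - p₁) = ε₀ - ε₁ = 0`, so `p₁ = -p₀`, and then `|2 p₀|² = 2`.
-/

open ComplexConjugate

lemma force_fin_two_zero (p ε : Fin 2 → ℂ) : force p ε 0 = conj (p 0) + ε 1 / (p 0 - p 1) := by
  simp [force, Finset.erase_eq]

lemma force_fin_two_one (p ε : Fin 2 → ℂ) : force p ε 1 = conj (p 1) + ε 0 / (p 1 - p 0) := by
  simp [force, Finset.erase_eq]

lemma isBalancedConfig_fin_two_iff {p ε : Fin 2 → ℂ} (hp : p 0 ≠ p 1) :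
    IsBalancedConfig p ε ↔
      (Complex.normSq (p 0 - p 1) : ℂ) = -(ε 0 + ε 1) ∧
        conj (p 0 + p 1) * (p 0 - p 1) = ε 0 - ε 1 := by
  have hd : p 0 - p 1 ≠ 0 := sub_ne_zero.2 hp
  have hnormSq : (Complex.normSq (p 0 - p 1) : ℂ) = conj (p 0 - p 1) * (p 0 - p 1) := by
    rw [mul_comm, Complex.mul_conj]
  rw [IsBalancedConfig, Fin.forall_fin_two, force_fin_two_zero, force_fin_two_one, hnormSq,
    map_sub, map_add]
  constructor
  · rintro ⟨h₀, h₁⟩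
    field_simp at h₀ h₁
    exact ⟨by linear_combination h₀ + h₁, by linear_combination h₀ - h₁⟩
  · rintro ⟨hdiff, hsum⟩
    constructor <;> field_simp
    · linear_combination (hdiff + hsum) / 2
    · linear_combination (hdiff - hsum) / 2

lemma eq_neg_one_of_ofReal_pos_eq_neg_add {e f : ℂ} (he : e = 1 ∨ e = -1) (hf : f = 1 ∨ f = -1)
    {r : ℝ} (hr : 0 < r) (h : (r : ℂ) = -(e + f)) : e = -1 ∧ f = -1 := by
  have hre := congrArg Complex.re h
  rcases he with rfl | rfl <;> rcases hf with rfl | rfl <;> norm_num at hre ⊢ <;> linarith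

lemma Complex.normSq_add_self_eq_two_iff (z : ℂ) : normSq (z + z) = 2 ↔ ‖z‖ = 1 / √2 := by
  rw [← two_mul, normSq_mul, normSq_ofNat, ← Complex.sq_norm, one_div, ← Real.sqrt_inv,
    @eq_comm _ ‖z‖, Real.sqrt_eq_iff_eq_sq (by norm_num) (norm_nonneg z)]
  constructor <;> intro h <;> linarith

/-- A two-point configuration `(p₁, p₂; ε₁, ε₂)` with `p₁ ≠ p₂` and charges `±1`
is balanced iff `ε₁ = ε₂ = -1`, `p₂ = -p₁` and `|p₁| = 1/√2`. -/
theorem two_point_balanced_iff (p₁ p₂ : ℂ) (hne : p₁ ≠ p₂)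
    (ε₁ ε₂ : ℂ) (hε₁ : ε₁ = 1 ∨ ε₁ = -1) (hε₂ : ε₂ = 1 ∨ ε₂ = -1) :
    IsBalancedConfig ![p₁, p₂] ![ε₁, ε₂] ↔
      (ε₁ = -1 ∧ ε₂ = -1 ∧ p₂ = -p₁ ∧ ‖p₁‖ = 1 / Real.sqrt 2) := by
  have hd : p₁ - p₂ ≠ 0 := sub_ne_zero.2 hne
  rw [isBalancedConfig_fin_two_iff hne]
  simp only [Matrix.cons_val_zero, Matrix.cons_val_one]
  constructor
  · rintro ⟨hdiff, hsum⟩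
    obtain ⟨rfl, rfl⟩ := eq_neg_one_of_ofReal_pos_eq_neg_add hε₁ hε₂
      (Complex.normSq_pos.2 hd) hdiff
    have hp : p₁ + p₂ = 0 :=
      (map_eq_zero _).1 ((mul_eq_zero.1 (hsum.trans (sub_self _))).resolve_right hd)
    obtain rfl : p₂ = -p₁ := eq_neg_of_add_eq_zero_right hp
    refine ⟨rfl, rfl, rfl, (Complex.normSq_add_self_eq_two_iff p₁).1 ?_⟩
    rw [← sub_neg_eq_add]
    exact_mod_cast hdiff.trans (by norm_num : -(-1 + -1 : ℂ) = 2)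
  · rintro ⟨rfl, rfl, rfl, hnorm⟩
    rw [sub_neg_eq_add, (Complex.normSq_add_self_eq_two_iff p₁).2 hnorm]
    norm_num
end

section
/- (Karcher–Scherk configurations) For every integer k ≥ 2, the configuration consisting of the k points p_m = √((k−1)/2) · e^{2πim/k}, m = 0, …, k−1, all with charge ε_m = −1, is balanced. -/
/-!
Write the points as `r ζ ^ m` with `ζ` a primitive `k`-th root of unity and `r ^ 2 = (k - 1) / 2`.
As `conj ζ = ζ⁻¹`, and the rotation `m ↦ m - j` factors `(r ζ ^ j)⁻¹` out of the sum, the force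
at `r ζ ^ j` is `ζ ^ (-j) (r - r⁻¹ S)` with `S = ∑_{m ≠ 0} (1 - ζ ^ m)⁻¹`. Pairing `m` with `-m`
and using `(1 - z)⁻¹ + (1 - z⁻¹)⁻¹ = 1` gives `S = (k - 1) / 2 = r ^ 2`.
-/

open Finset

theorem inv_one_sub_add_inv_one_sub_inv {K : Type*} [Field K] {z : K} (h0 : z ≠ 0) (h1 : z ≠ 1) :
    (1 - z)⁻¹ + (1 - z⁻¹)⁻¹ = 1 := by
  have : 1 - z ≠ 0 := sub_ne_zero.mpr h1.symm
  have : z - 1 ≠ 0 := sub_ne_zero.mpr h1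
  field_simp
  ring

namespace IsPrimitiveRoot

section CommMonoid

variable {M : Type*} [CommMonoid M] {ζ : M} {k : ℕ}

theorem pow_fin_add (hζ : IsPrimitiveRoot ζ k) (a b : Fin k) :
    ζ ^ ((a + b : Fin k) : ℕ) = ζ ^ (a : ℕ) * ζ ^ (b : ℕ) := by
  rw [Fin.val_add, ← pow_add]
  simpa only [← hζ.eq_orderOf] using pow_mod_orderOf ζ (a + b : ℕ)

theorem pow_fin_neg_mul_pow [NeZero k] (hζ : IsPrimitiveRoot ζ k) (m : Fin k) :
    ζ ^ ((-m : Fin k) : ℕ) * ζ ^ (m : ℕ) = 1 := by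
  rw [← hζ.pow_fin_add, neg_add_cancel, Fin.val_zero, pow_zero]

theorem pow_fin_ne_one [NeZero k] (hζ : IsPrimitiveRoot ζ k) {m : Fin k} (hm : m ≠ 0) :
    ζ ^ (m : ℕ) ≠ 1 :=
  hζ.pow_ne_one_of_pos_of_lt (Fin.val_ne_zero_iff.mpr hm) m.isLt

end CommMonoid

variable {K : Type*} [Field K] {ζ : K} {k : ℕ} [NeZero k]

theorem two_mul_sum_inv_one_sub_pow (hζ : IsPrimitiveRoot ζ k) :
    2 * ∑ m ∈ univ.erase (0 : Fin k), (1 - ζ ^ (m : ℕ))⁻¹ = k - 1 := by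
  have hneg : ∑ m ∈ univ.erase (0 : Fin k), (1 - ζ ^ (m : ℕ))⁻¹ =
      ∑ m ∈ univ.erase (0 : Fin k), (1 - ζ ^ ((-m : Fin k) : ℕ))⁻¹ :=
    sum_nbij' (-·) (-·) (by simp) (by simp) (by simp) (by simp) (by simp)
  have hpair : ∀ m ∈ univ.erase (0 : Fin k),
      (1 - ζ ^ (m : ℕ))⁻¹ + (1 - ζ ^ ((-m : Fin k) : ℕ))⁻¹ = 1 := by
    intro m hm
    rw [eq_inv_of_mul_eq_one_left (hζ.pow_fin_neg_mul_pow m)]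
    exact inv_one_sub_add_inv_one_sub_inv (pow_ne_zero _ (hζ.ne_zero (NeZero.ne k)))
      (hζ.pow_fin_ne_one (ne_of_mem_erase hm))
  rw [two_mul]
  nth_rw 2 [hneg]
  rw [← sum_add_distrib, sum_congr rfl hpair, sum_const, card_erase_of_mem (mem_univ _),
    card_univ, Fintype.card_fin, nsmul_one, Nat.cast_pred (Nat.pos_of_neZero k)]

theorem sum_inv_pow_sub_pow (hζ : IsPrimitiveRoot ζ k) (j : Fin k) :
    ∑ m ∈ univ.erase j, (ζ ^ (j : ℕ) - ζ ^ (m : ℕ))⁻¹ =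
      (ζ ^ (j : ℕ))⁻¹ * ∑ m ∈ univ.erase (0 : Fin k), (1 - ζ ^ (m : ℕ))⁻¹ := by
  rw [mul_sum]
  refine sum_nbij' (· - j) (· + j) (by simp [sub_eq_zero]) (by simp [add_eq_right])
    (fun m _ => sub_add_cancel m j) (fun m _ => add_sub_cancel_right m j) fun m _ => ?_
  conv_lhs => rw [← sub_add_cancel m j, hζ.pow_fin_add]
  rw [← mul_inv, mul_one_sub, mul_comm]

end IsPrimitiveRoot

theorem isBalancedConfig_smul_pow_primitiveRoot {k : ℕ} [NeZero k] {ζ : ℂ}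
    (hζ : IsPrimitiveRoot ζ k) {r : ℝ} (hr : r ^ 2 = ((k : ℝ) - 1) / 2) :
    IsBalancedConfig (fun m : Fin k => (r : ℂ) * ζ ^ (m : ℕ)) (fun _ => -1) := by
  intro j
  have hconj : starRingEnd ℂ (ζ ^ (j : ℕ)) = (ζ ^ (j : ℕ))⁻¹ :=
    (Complex.inv_eq_conj (by rw [norm_pow, hζ.norm'_eq_one (NeZero.ne k), one_pow])).symm
  have hsum_eq_sq : ∑ m ∈ univ.erase (0 : Fin k), (1 - ζ ^ (m : ℕ))⁻¹ = (r : ℂ) ^ 2 := by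
    have := hζ.two_mul_sum_inv_one_sub_pow
    rw [← Complex.ofReal_pow, hr]
    push_cast
    linear_combination this / 2
  have hfactor_r : ∑ m ∈ univ.erase j, (-1) / ((r : ℂ) * ζ ^ (j : ℕ) - r * ζ ^ (m : ℕ)) =
      -(r : ℂ)⁻¹ * ∑ m ∈ univ.erase j, (ζ ^ (j : ℕ) - ζ ^ (m : ℕ))⁻¹ := by
    rw [mul_sum]
    refine sum_congr rfl fun m _ => ?_
    rw [← mul_sub, neg_div, one_div, mul_inv, neg_mul]
  have hr_inv : (r : ℂ)⁻¹ * r ^ 2 = r := by rw [pow_two, ← mul_assoc, inv_mul_mul_self]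
  rw [force, hfactor_r, hζ.sum_inv_pow_sub_pow, hsum_eq_sq, map_mul, Complex.conj_ofReal, hconj]
  linear_combination -(ζ ^ (j : ℕ))⁻¹ * hr_inv

/-- (Karcher–Scherk) For `k ≥ 2`, the configuration of the `k` points
`√((k-1)/2) · e^{2πim/k}`, `m = 0, …, k-1`, all with charge `-1`, is balanced. -/
theorem karcherScherk_balanced (k : ℕ) (hk : 2 ≤ k) :
    IsBalancedConfig
      (fun m : Fin k =>
        (Real.sqrt (((k : ℝ) - 1) / 2) : ℂ) *
          Complex.exp (2 * Real.pi * Complex.I / k) ^ (m : ℕ))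
      (fun _ => -1) := by
  have : NeZero k := ⟨by omega⟩
  have hk' : (1 : ℝ) ≤ k := by exact_mod_cast one_le_two.trans hk
  exact isBalancedConfig_smul_pow_primitiveRoot (Complex.isPrimitiveRoot_exp k (NeZero.ne k))
    (Real.sq_sqrt (by linarith))
end

section
/- (Simplification of forces for simply dihedral configurations) Let k ≥ 2, φ = e^{2πi/k}, and let 0 < p_{11} < … < p_{1n₁} and 0 < p_{21} < … < p_{2n₂} be real numbers with charges ε_{1l}, ε_{2l} ∈ {1, −1}, and let ε₀ ∈ {−1, 0, 1}. Consider the configuration whose points are p_{1l}·φ^m with charge ε_{1l} (l = 1, …, n₁, m = 0, …, k−1), p_{2l}·e^{iπ/k}·φ^m with charge ε_{2l} (l = 1, …, n₂, m = 0, …, k−1), together with the origin with charge ε₀ when ε₀ ≠ 0. Then the force of this configuration at the point p_{1j} is the real number p_{1j} + ((k−1)ε_{1j} + 2ε₀)/(2p_{1j}) + Σ_{l≠j} ε_{1l}·k·p_{1j}^{k−1}/(p_{1j}^k − p_{1l}^k) + Σ_{l=1}^{n₂} ε_{2l}·k·p_{1j}^{k−1}/(p_{1j}^k + p_{2l}^k).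 -/
/-!
Grouping the points into orbits `{a φ^m}` of the rotation by `φ`, an orbit not containing `p`
contributes `ε ∑ₘ 1 / (p - a φ^m)`, the logarithmic derivative at `p` of
`∏ₘ (X - a φ^m) = X^k - a^k`, i.e. `ε k p^(k-1) / (p^k - a^k)`; for the second family
`a^k = -p₂^k`. The orbit of `p` itself contributes `(ε / p) ∑_{m=1}^{k-1} 1 / (1 - φ^m)
= ε (k - 1) / (2p)`, since pairing `m` with `k - m` gives `1 / (1 - z) + 1 / (1 - z⁻¹) = 1`.
-/

open Finset Polynomial

theorem IsPrimitiveRoot.sum_inv_sub_mul_pow {K : Type*} [Field K] {ζ : K} {n : ℕ}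
    (hζ : IsPrimitiveRoot ζ n) (hn : 0 < n) {x a : K} (hxa : x ^ n ≠ a ^ n) :
    ∑ i ∈ range n, (x - a * ζ ^ i)⁻¹ = n * x ^ (n - 1) / (x ^ n - a ^ n) := by
  have hP : X ^ n - C (a ^ n) = ∏ i ∈ range n, (X - C (a * ζ ^ i)) := by
    simpa only [mul_comm] using X_pow_sub_C_eq_prod hζ hn (rfl : a ^ n = a ^ n)
  have hval : ∏ i ∈ range n, (x - a * ζ ^ i) = x ^ n - a ^ n := by
    simpa [eval_prod] using (congrArg (eval x) hP).symm
  have hderiv : ∑ i ∈ range n, ∏ j ∈ (range n).erase i, (x - a * ζ ^ j) = n * x ^ (n - 1) := by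
    have h := congrArg (fun P => eval x (derivative P)) hP
    simp only [derivative_sub, derivative_X_pow, derivative_C, sub_zero, derivative_prod_finset,
      derivative_X, mul_one, eval_finsetSum, eval_prod, eval_sub, eval_mul, eval_pow,
      eval_X, eval_C] at h
    exact h.symm
  have hne : x ^ n - a ^ n ≠ 0 := sub_ne_zero.mpr hxa
  have hterm : ∀ i ∈ range n, (x - a * ζ ^ i)⁻¹ =
      (∏ j ∈ (range n).erase i, (x - a * ζ ^ j)) / (x ^ n - a ^ n) := by
    intro i hi
    have hi0 : x - a * ζ ^ i ≠ 0 := fun h0 => hne (hval ▸ prod_eq_zero hi h0)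
    rw [eq_div_iff hne, ← hval, ← prod_erase_mul _ _ hi, mul_comm, mul_inv_cancel_right₀ hi0]
  rw [sum_congr rfl hterm, ← sum_div, hderiv]

theorem inv_one_sub_add_inv_one_sub_of_mul_eq_one {K : Type*} [Field K] {z w : K}
    (hzw : z * w = 1) (hz : z ≠ 1) : (1 - z)⁻¹ + (1 - w)⁻¹ = 1 := by
  have hw : w ≠ 1 := fun h => hz (by simpa [h] using hzw)
  have h1 : 1 - z ≠ 0 := sub_ne_zero.mpr hz.symm
  have h2 : 1 - w ≠ 0 := sub_ne_zero.mpr hw.symm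
  field_simp
  linear_combination -hzw

theorem IsPrimitiveRoot.two_mul_sum_inv_one_sub_pow_s9 {K : Type*} [Field K] {ζ : K} {n : ℕ}
    (hζ : IsPrimitiveRoot ζ n) (hn : 0 < n) :
    2 * ∑ i ∈ Ico 1 n, (1 - ζ ^ i)⁻¹ = n - 1 := by
  have hreflect : ∑ i ∈ Ico 1 n, (1 - ζ ^ (n - i))⁻¹ = ∑ i ∈ Ico 1 n, (1 - ζ ^ i)⁻¹ := by
    rw [sum_Ico_reflect (fun i => (1 - ζ ^ i)⁻¹) 1 n.le_succ, Nat.add_sub_cancel_left,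
      Nat.add_sub_cancel]
  have hpair : ∀ i ∈ Ico 1 n, (1 - ζ ^ i)⁻¹ + (1 - ζ ^ (n - i))⁻¹ = 1 := by
    intro i hi
    rw [mem_Ico] at hi
    refine inv_one_sub_add_inv_one_sub_of_mul_eq_one ?_ (hζ.pow_ne_one_of_pos_of_lt (by omega) hi.2)
    rw [← pow_add, Nat.add_sub_cancel' hi.2.le, hζ.pow_eq_one]
  calc 2 * ∑ i ∈ Ico 1 n, (1 - ζ ^ i)⁻¹
      = ∑ i ∈ Ico 1 n, ((1 - ζ ^ i)⁻¹ + (1 - ζ ^ (n - i))⁻¹) := by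
        rw [two_mul, sum_add_distrib, hreflect]
    _ = n - 1 := by
        rw [sum_congr rfl hpair, sum_const, Nat.card_Ico, nsmul_one, Nat.cast_sub hn]
        simp

theorem IsPrimitiveRoot.sum_fin_div_sub_mul_pow {K : Type*} [Field K] {ζ : K} {n : ℕ}
    (hζ : IsPrimitiveRoot ζ n) (hn : 0 < n) (e : K) {x a : K} (hxa : x ^ n ≠ a ^ n) :
    ∑ i : Fin n, e / (x - a * ζ ^ (i : ℕ)) = e * n * x ^ (n - 1) / (x ^ n - a ^ n) := by
  simp_rw [div_eq_mul_inv, ← mul_sum]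
  rw [Fin.sum_univ_eq_sum_range (fun i => (x - a * ζ ^ i)⁻¹), hζ.sum_inv_sub_mul_pow hn hxa]
  ring

theorem IsPrimitiveRoot.sum_fin_div_sub_self_mul_pow {K : Type*} [Field K] [NeZero (2 : K)]
    {ζ : K} {n : ℕ} (hζ : IsPrimitiveRoot ζ n) (hn : 0 < n) (e x : K) :
    ∑ i : Fin n, e / (x - x * ζ ^ (i : ℕ)) = e * (n - 1) / (2 * x) := by
  have hsum := hζ.two_mul_sum_inv_one_sub_pow_s9 hn
  -- the term `i = 0` is `e / 0 = 0`
  rw [Fin.sum_univ_eq_sum_range (fun i => e / (x - x * ζ ^ i)), range_eq_Ico,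
    sum_eq_sum_Ico_succ_bot hn, pow_zero, mul_one, sub_self, div_zero, zero_add]
  have hterm : ∀ i ∈ Ico 1 n, e / (x - x * ζ ^ i) = e / x * (1 - ζ ^ i)⁻¹ := fun i _ => by
    rw [← mul_one_sub, div_mul_eq_div_div, div_eq_mul_inv]
  rw [sum_congr rfl hterm, ← mul_sum, ← hsum, mul_left_comm, mul_div_mul_left _ _ two_ne_zero,
    div_mul_eq_mul_div]

theorem Complex.exp_pi_mul_I_div_pow_self {k : ℕ} (hk : k ≠ 0) :
    Complex.exp (Real.pi * Complex.I / k) ^ k = -1 := by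
  rw [← Complex.exp_nat_mul, mul_div_cancel₀ _ (Nat.cast_ne_zero.mpr hk), Complex.exp_pi_mul_I]

/-- (Simplification of forces for simply dihedral configurations)
For the configuration whose points are `p₁ l · φ^m` with charge `ε₁ l`,
`p₂ l · e^{iπ/k} · φ^m` with charge `ε₂ l` (where `φ = e^{2πi/k}`), together with the
origin carrying charge `ε₀ ∈ {-1, 0, 1}` (charge `0` meaning no central point, which
contributes nothing to the forces at the other points), the force at the point `p₁ j`
is the stated real number. -/
theorem dihedral_force_formula (k n₁ n₂ : ℕ) (hk : 2 ≤ k)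
    (p₁ : Fin n₁ → ℝ) (p₂ : Fin n₂ → ℝ)
    (hp₁ : ∀ l, 0 < p₁ l) (hp₂ : ∀ l, 0 < p₂ l)
    (hp₁mono : StrictMono p₁)
    (ε₁ : Fin n₁ → ℝ) (ε₂ : Fin n₂ → ℝ)
    (ε₀ : ℝ) (j : Fin n₁) :
    force
      (fun i : (Fin n₁ × Fin k) ⊕ (Fin n₂ × Fin k) ⊕ Unit =>
        match i with
        | Sum.inl (l, m) =>
            (p₁ l : ℂ) * Complex.exp (2 * Real.pi * Complex.I / k) ^ (m : ℕ)
        | Sum.inr (Sum.inl (l, m)) =>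
            (p₂ l : ℂ) * Complex.exp (Real.pi * Complex.I / k) *
              Complex.exp (2 * Real.pi * Complex.I / k) ^ (m : ℕ)
        | Sum.inr (Sum.inr _) => 0)
      (fun i =>
        match i with
        | Sum.inl (l, _) => (ε₁ l : ℂ)
        | Sum.inr (Sum.inl (l, _)) => (ε₂ l : ℂ)
        | Sum.inr (Sum.inr _) => (ε₀ : ℂ))
      (Sum.inl (j, ⟨0, by omega⟩)) =
    ((p₁ j + ((k - 1) * ε₁ j + 2 * ε₀) / (2 * p₁ j)
        + ∑ l ∈ Finset.univ.erase j,
            ε₁ l * k * p₁ j ^ (k - 1) / (p₁ j ^ k - p₁ l ^ k)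
        + ∑ l, ε₂ l * k * p₁ j ^ (k - 1) / (p₁ j ^ k + p₂ l ^ k) : ℝ) : ℂ) := by
  have hk0 : 0 < k := by omega
  have hφ : IsPrimitiveRoot (Complex.exp (2 * Real.pi * Complex.I / k)) k :=
    Complex.isPrimitiveRoot_exp k hk0.ne'
  have hp₁pow : ∀ l ≠ j, (p₁ j : ℂ) ^ k ≠ (p₁ l : ℂ) ^ k := fun l hl h =>
    hl <| hp₁mono.injective <| (pow_left_inj₀ (hp₁ l).le (hp₁ j).le hk0.ne').mp <| by
      exact_mod_cast h.symm
  have hp₂pow : ∀ l, (p₁ j : ℂ) ^ k ≠ ((p₂ l : ℂ) * Complex.exp (Real.pi * Complex.I / k)) ^ k :=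
    fun l h => by
      rw [mul_pow, Complex.exp_pi_mul_I_div_pow_self hk0.ne', mul_neg_one] at h
      have h' : p₁ j ^ k = -p₂ l ^ k := by exact_mod_cast h
      linarith [pow_pos (hp₁ j) k, pow_pos (hp₂ l) k]
  -- the self-term omitted in `force` is `ε j / 0 = 0` anyway
  rw [force, sum_erase _ (by simp)]
  simp only [Fintype.sum_sum_type, Fintype.sum_prod_type, pow_zero, mul_one,
    Complex.conj_ofReal, sub_zero, univ_unique, sum_singleton]
  rw [← add_sum_erase _ _ (mem_univ j), hφ.sum_fin_div_sub_self_mul_pow hk0,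
    sum_congr rfl fun l hl => hφ.sum_fin_div_sub_mul_pow hk0 _ (hp₁pow l (ne_of_mem_erase hl)),
    sum_congr rfl fun l _ => hφ.sum_fin_div_sub_mul_pow hk0 _ (hp₂pow l)]
  simp only [mul_pow, Complex.exp_pi_mul_I_div_pow_self hk0.ne', mul_neg_one, sub_neg_eq_add]
  push_cast
  ring
end

section
/- (Reduced balance equations for all-negative dihedral configurations) Let n ≥ 1, k ≥ 2 be integers and ε₀ ∈ {−1, 0, 1}, with k ≥ 4 in case ε₀ = 1. Then there exist real numbers 0 < p₁ < p₂ < … < pₙ such that for every j = 1, …, n: p_j − (k − 1 − 2ε₀)/(2p_j) − Σ_{l≠j} k·p_j^{k−1}/(p_j^k − p_l^k) = 0. -/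
/-!
With `c = k - 1 - 2ε₀ > 0`, the balance equations say that `p` is a critical point of the
logarithmic energy
`E p = ∑ j (p j ^ 2 / 2 - c / 2 * log (p j)) - ∑_{i < l} log (p l ^ k - p i ^ k)`
on the open cone `0 < p 1 < ⋯ < p n`. Bounding each logarithm by a linear function, the quadratic
term controls `E` from below up to three families of nonnegative terms, each of which blows up at
infinity, as some `p j → 0` (because `c > 0`), or as two of the `p j ^ k` collide. Hence the
sublevel sets of `E` in the cone are compact, `E` attains its minimum there, and the partial
derivatives vanish at the minimiser.
-/

open Finset Function

lemma exists_isMinOn_of_sublevel_subset_isCompact {X α : Type*} [TopologicalSpace X]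
    [LinearOrder α] [TopologicalSpace α] [ClosedIicTopology α] {f : X → α} {U K : Set X}
    (hK : IsCompact K) (hKU : K ⊆ U) (hf : ContinuousOn f K) {x₀ : X} (hx₀ : x₀ ∈ U)
    (hsub : ∀ x ∈ U, f x ≤ f x₀ → x ∈ K) : ∃ x ∈ U, IsMinOn f U x := by
  have hx₀K := hsub x₀ hx₀ le_rfl
  obtain ⟨x, hxK, hmin⟩ := hK.exists_isMinOn ⟨x₀, hx₀K⟩ hf
  refine ⟨x, hKU hxK, fun y hy => ?_⟩
  rcases le_total (f y) (f x₀) with hy' | hy'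
  · exact hmin (hsub y hy hy')
  · exact (hmin hx₀K).trans hy'

section Energy

variable {ι : Type*} [Fintype ι] [DecidableEq ι]

/-- As `Real.log x = Real.log |x|`, the pair sum is the symmetric form of
`∑_{i < l} log |p l ^ k - p i ^ k|`. -/
noncomputable def balanceEnergy (k : ℕ) (c : ℝ) (p : ι → ℝ) : ℝ :=
  ∑ j, (p j ^ 2 / 2 - c / 2 * Real.log (p j))
    - (1 / 2) * ∑ j, ∑ l ∈ univ.erase j, Real.log (p j ^ k - p l ^ k)

lemma sum_sum_erase_eq_sum_erase_add {M : Type*} [AddCommMonoid M] (F : ι → ι → M) (j : ι) :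
    ∑ i, ∑ l ∈ univ.erase i, F i l
      = ∑ l ∈ univ.erase j, (F j l + F l j)
        + ∑ i ∈ univ.erase j, ∑ l ∈ (univ.erase i).erase j, F i l := by
  have hsplit : ∀ i ∈ univ.erase j,
      ∑ l ∈ univ.erase i, F i l = F i j + ∑ l ∈ (univ.erase i).erase j, F i l := fun i hi =>
    (add_sum_erase _ _ (mem_erase.2 ⟨(ne_of_mem_erase hi).symm, mem_univ j⟩)).symm
  rw [← add_sum_erase _ _ (mem_univ j), sum_congr rfl hsplit, sum_add_distrib, sum_add_distrib,
    add_assoc]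

lemma balanceEnergy_update (k : ℕ) (c : ℝ) (x : ι → ℝ) (j : ι) : ∃ C, ∀ t,
    balanceEnergy k c (update x j t) = t ^ 2 / 2 - c / 2 * Real.log t
      - ∑ l ∈ univ.erase j, Real.log (t ^ k - x l ^ k) + C := by
  refine ⟨∑ m ∈ univ.erase j, (x m ^ 2 / 2 - c / 2 * Real.log (x m))
    - (1 / 2) * ∑ i ∈ univ.erase j, ∑ l ∈ (univ.erase i).erase j,
      Real.log (x i ^ k - x l ^ k), fun t => ?_⟩
  unfold balanceEnergy
  rw [← add_sum_erase _ _ (mem_univ j), sum_sum_erase_eq_sum_erase_add _ j]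
  simp only [update_self]
  have hfix : ∀ m ∈ univ.erase j, update x j t m = x m := fun m hm =>
    update_of_ne (ne_of_mem_erase hm) t x
  have hself : ∑ m ∈ univ.erase j, (update x j t m ^ 2 / 2 - c / 2 * Real.log (update x j t m))
      = ∑ m ∈ univ.erase j, (x m ^ 2 / 2 - c / 2 * Real.log (x m)) :=
    sum_congr rfl fun m hm => by rw [hfix m hm]
  have hpair : ∑ l ∈ univ.erase j,
      (Real.log (t ^ k - update x j t l ^ k) + Real.log (update x j t l ^ k - t ^ k))
      = 2 * ∑ l ∈ univ.erase j, Real.log (t ^ k - x l ^ k) := by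
    rw [mul_sum]
    refine sum_congr rfl fun l hl => ?_
    rw [hfix l hl, ← Real.log_neg_eq_log (x l ^ k - t ^ k), neg_sub]
    ring
  have hrest : ∑ i ∈ univ.erase j, ∑ l ∈ (univ.erase i).erase j,
      Real.log (update x j t i ^ k - update x j t l ^ k)
      = ∑ i ∈ univ.erase j, ∑ l ∈ (univ.erase i).erase j, Real.log (x i ^ k - x l ^ k) :=
    sum_congr rfl fun i hi => sum_congr rfl fun l hl => by
      rw [hfix i hi, hfix l (mem_erase.2 ⟨ne_of_mem_erase hl, mem_univ l⟩)]
  rw [hself, hpair, hrest]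
  ring

lemma hasDerivAt_balanceEnergy_update (k : ℕ) (c : ℝ) {x : ι → ℝ} {j : ι} (hx : 0 < x j)
    (hne : ∀ l ≠ j, x j ^ k ≠ x l ^ k) :
    HasDerivAt (fun t => balanceEnergy k c (update x j t))
      (x j - c / (2 * x j) - ∑ l ∈ univ.erase j, k * x j ^ (k - 1) / (x j ^ k - x l ^ k))
      (x j) := by
  obtain ⟨C, hC⟩ := balanceEnergy_update k c x j
  have hquad : HasDerivAt (fun t : ℝ => t ^ 2 / 2) (x j) (x j) := by
    simpa using (hasDerivAt_pow 2 (x j)).div_const 2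
  have hlog : HasDerivAt (fun t => c / 2 * Real.log t) (c / (2 * x j)) (x j) :=
    ((Real.hasDerivAt_log hx.ne').const_mul (c / 2)).congr_deriv (by ring)
  have hpair : HasDerivAt (fun t => ∑ l ∈ univ.erase j, Real.log (t ^ k - x l ^ k))
      (∑ l ∈ univ.erase j, k * x j ^ (k - 1) / (x j ^ k - x l ^ k)) (x j) :=
    HasDerivAt.fun_sum fun l hl => by
      simpa using ((hasDerivAt_pow k (x j)).sub_const (x l ^ k)).log
        (sub_ne_zero.2 (hne l (ne_of_mem_erase hl)))
  rw [funext hC]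
  exact ((hquad.sub hlog).sub hpair).add_const C

lemma continuousAt_balanceEnergy (k : ℕ) (c : ℝ) {p : ι → ℝ} (hp : ∀ j, 0 < p j)
    (hne : Pairwise fun i l => p i ^ k ≠ p l ^ k) :
    ContinuousAt (balanceEnergy k c) p := by
  unfold balanceEnergy
  refine (tendsto_finsetSum _ fun j _ => ?_).sub
    ((tendsto_finsetSum _ fun j _ => tendsto_finsetSum _ fun l hl => ?_).const_mul _)
  · show ContinuousAt _ p
    have hj : ContinuousAt (fun q : ι → ℝ => q j) p := (continuous_apply j).continuousAt
    exact ((hj.pow 2).div_const 2).sub ((hj.log (hp j).ne').const_mul _)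
  · show ContinuousAt _ p
    fun_prop (disch := exact sub_ne_zero.2 (hne (ne_of_mem_erase hl).symm))

lemma log_pow_sub_pow_le {a b : ℝ} (ha : 0 ≤ a) (hb : 0 ≤ b) (k : ℕ) :
    Real.log (a ^ k - b ^ k) ≤ k * (a + b) := by
  rcases eq_or_ne (a ^ k - b ^ k) 0 with h | h
  · rw [h, Real.log_zero]; positivity
  have hle : |a ^ k - b ^ k| ≤ (a + b) ^ k := by
    have := pow_le_pow_left₀ ha (le_add_of_nonneg_right hb) k
    have := pow_le_pow_left₀ hb (le_add_of_nonneg_left ha) k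
    exact abs_sub_le_iff.2 ⟨by linarith [pow_nonneg hb k], by linarith [pow_nonneg ha k]⟩
  calc Real.log (a ^ k - b ^ k) = Real.log |a ^ k - b ^ k| := (Real.log_abs _).symm
    _ ≤ Real.log ((a + b) ^ k) := Real.log_le_log (abs_pos.2 h) hle
    _ = k * Real.log (a + b) := Real.log_pow (a + b) k
    _ ≤ k * (a + b) := by gcongr; exact Real.log_le_self (by positivity)

lemma le_balanceEnergy_add (k : ℕ) (c : ℝ) {p : ι → ℝ} (hp : ∀ j, 0 < p j) :
    ∑ j, (p j - (c / 2 + k * Fintype.card ι)) ^ 2 / 2 + c / 2 * ∑ j, (p j - Real.log (p j))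
      + 1 / 2 * ∑ j, ∑ l ∈ univ.erase j, (k * (p j + p l) - Real.log (p j ^ k - p l ^ k))
      ≤ balanceEnergy k c p + Fintype.card ι * (c / 2 + k * Fintype.card ι) ^ 2 / 2 := by
  set b := c / 2 + k * Fintype.card ι
  have hpairs : ∑ j, ∑ l ∈ univ.erase j, (p j + p l) ≤ 2 * Fintype.card ι * ∑ j, p j :=
    calc ∑ j, ∑ l ∈ univ.erase j, (p j + p l) ≤ ∑ j, ∑ l, (p j + p l) :=
          sum_le_sum fun j _ => sum_le_sum_of_subset_of_nonneg (erase_subset _ _)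
            fun l _ _ => (add_pos (hp j) (hp l)).le
      _ = 2 * Fintype.card ι * ∑ j, p j := by
          simp only [sum_add_distrib, sum_const, card_univ, nsmul_eq_mul, ← mul_sum]; ring
  have hquad : ∑ j, (p j - b) ^ 2 / 2
      = ∑ j, p j ^ 2 / 2 - b * ∑ j, p j + Fintype.card ι * b ^ 2 / 2 := by
    have h : ∀ j, (p j - b) ^ 2 / 2 = p j ^ 2 / 2 - b * p j + b ^ 2 / 2 := fun j => by ring
    simp only [h, sum_add_distrib, sum_sub_distrib, ← mul_sum, sum_const, card_univ, nsmul_eq_mul]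
    ring
  have hlog : ∑ j, ∑ l ∈ univ.erase j, (k * (p j + p l) - Real.log (p j ^ k - p l ^ k))
      = k * ∑ j, ∑ l ∈ univ.erase j, (p j + p l)
        - ∑ j, ∑ l ∈ univ.erase j, Real.log (p j ^ k - p l ^ k) := by
    simp only [sum_sub_distrib, mul_sum]
  have hk := mul_le_mul_of_nonneg_left hpairs k.cast_nonneg
  rw [hquad, sum_sub_distrib, hlog]
  unfold balanceEnergy
  rw [sum_sub_distrib, ← mul_sum]
  simp only [b]
  linarith

end Energy

section Ordered

variable {ι : Type*} [LinearOrder ι]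

def orderedConfigs (ι : Type*) [Preorder ι] : Set (ι → ℝ) :=
  {p | (∀ j, 0 < p j) ∧ StrictMono p}

lemma isOpen_orderedConfigs [Finite ι] : IsOpen (orderedConfigs ι) := by
  have h : orderedConfigs ι
      = (⋂ j, {p | 0 < p j}) ∩ ⋂ i, ⋂ l, ⋂ (_ : i < l), {p | p i < p l} := by
    ext p; simp [orderedConfigs, StrictMono]
  rw [h]
  exact (isOpen_iInter_of_finite fun j => isOpen_lt continuous_const (continuous_apply j)).inter
    (isOpen_iInter_of_finite fun i => isOpen_iInter_of_finite fun l => isOpen_iInter_of_finite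
      fun _ => isOpen_lt (continuous_apply i) (continuous_apply l))

lemma pairwise_pow_ne_of_mem_orderedConfigs {k : ℕ} (hk : k ≠ 0) {p : ι → ℝ}
    (hp : p ∈ orderedConfigs ι) : Pairwise fun i l => p i ^ k ≠ p l ^ k := fun i l hil h =>
  hil (hp.2.injective ((pow_left_inj₀ (hp.1 i).le (hp.1 l).le hk).1 h))

def gapBox (k : ℕ) (δ R η : ℝ) : Set (ι → ℝ) :=
  {p | (∀ j, p j ∈ Set.Icc δ R) ∧ ∀ i l, i < l → η ≤ p l ^ k - p i ^ k}

lemma isCompact_gapBox (k : ℕ) (δ R η : ℝ) :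
    IsCompact (gapBox k δ R η : Set (ι → ℝ)) := by
  refine isCompact_Icc.of_isClosed_subset ?_
    fun p hp => ⟨fun j => (hp.1 j).1, fun j => (hp.1 j).2⟩
  have h : (gapBox k δ R η : Set (ι → ℝ))
      = (⋂ j, (fun p : ι → ℝ => p j) ⁻¹' Set.Icc δ R)
        ∩ ⋂ i, ⋂ l, ⋂ (_ : i < l), {p | η ≤ p l ^ k - p i ^ k} := by
    ext p; simp [gapBox]
  rw [h]
  exact (isClosed_iInter fun j => isClosed_Icc.preimage (continuous_apply j)).inter
    (isClosed_iInter fun i => isClosed_iInter fun l => isClosed_iInter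
      fun _ => isClosed_le continuous_const (by fun_prop))

lemma gapBox_subset_orderedConfigs (k : ℕ) {δ R η : ℝ} (hδ : 0 < δ) (hη : 0 < η) :
    gapBox k δ R η ⊆ orderedConfigs ι := by
  rintro p ⟨hbox, hgap⟩
  have hpos : ∀ j, 0 < p j := fun j => hδ.trans_le (hbox j).1
  exact ⟨hpos, fun i l hil =>
    lt_of_pow_lt_pow_left₀ k (hpos l).le (by linarith [hgap i l hil])⟩

lemma exists_gapBox_of_balanceEnergy_le [Fintype ι] {k : ℕ} (hk : k ≠ 0) {c : ℝ} (hc : 0 < c)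
    (M : ℝ) : ∃ δ R η, 0 < δ ∧ 0 < η ∧
      ∀ p ∈ orderedConfigs ι, balanceEnergy k c p ≤ M → p ∈ gapBox k δ R η := by
  set b := c / 2 + k * Fintype.card ι with hb
  set B := M + Fintype.card ι * b ^ 2 / 2 with hB
  refine ⟨Real.exp (-(2 * B / c)), b + B + 1, Real.exp (-(2 * B)), Real.exp_pos _,
    Real.exp_pos _, fun p hp hE => ?_⟩
  have hbound := le_balanceEnergy_add k c hp.1
  rw [← hb] at hbound
  replace hbound := hbound.trans (add_le_add_left hE _)
  rw [← hB] at hbound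
  have hquad : ∀ j, 0 ≤ (p j - b) ^ 2 / 2 := fun j => by positivity
  have hself : ∀ j, 0 ≤ p j - Real.log (p j) := fun j =>
    sub_nonneg.2 (Real.log_le_self (hp.1 j).le)
  have hpair : ∀ j, ∀ l ∈ univ.erase j,
      0 ≤ k * (p j + p l) - Real.log (p j ^ k - p l ^ k) := fun j l _ =>
    sub_nonneg.2 (log_pow_sub_pow_le (hp.1 j).le (hp.1 l).le k)
  -- all three sums have nonnegative terms, so each single term is at most `B`
  have hquad_sum := sum_nonneg fun j (_ : j ∈ univ) => hquad j
  have hself_sum := mul_nonneg (half_pos hc).le (sum_nonneg fun j (_ : j ∈ univ) => hself j)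
  have hpair_sum := mul_nonneg (by norm_num : (0 : ℝ) ≤ 1 / 2)
    (sum_nonneg fun j (_ : j ∈ univ) => sum_nonneg (hpair j))
  refine ⟨fun j => ⟨?_, ?_⟩, fun i l hil => ?_⟩
  · have h := mul_le_mul_of_nonneg_left (single_le_sum (fun j _ => hself j) (mem_univ j))
      (half_pos hc).le
    have hlog : -(2 * B / c) ≤ Real.log (p j) := by
      rw [neg_le, le_div_iff₀ hc]; nlinarith [mul_pos hc (hp.1 j)]
    exact (Real.le_log_iff_exp_le (hp.1 j)).1 hlog
  · have h := single_le_sum (fun j _ => hquad j) (mem_univ j)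
    nlinarith [sq_nonneg (p j - b - 1)]
  · have hgap : 0 < p l ^ k - p i ^ k :=
      sub_pos.2 (pow_lt_pow_left₀ (hp.2 hil) (hp.1 i).le hk)
    have h := (single_le_sum (hpair l) (mem_erase.2 ⟨hil.ne, mem_univ i⟩)).trans
      (single_le_sum (fun j _ => sum_nonneg (hpair j)) (mem_univ l))
    have hlog : -(2 * B) ≤ Real.log (p l ^ k - p i ^ k) := by
      nlinarith [(hp.1 i).le, (hp.1 l).le, (k.cast_nonneg : (0 : ℝ) ≤ k)]
    exact (Real.le_log_iff_exp_le hgap).1 hlog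

lemma exists_isMinOn_balanceEnergy [Fintype ι] {k : ℕ} (hk : k ≠ 0) {c : ℝ} (hc : 0 < c) :
    ∃ p ∈ orderedConfigs ι, IsMinOn (balanceEnergy k c) (orderedConfigs ι) p := by
  set p₀ : ι → ℝ := fun i => ((Fintype.orderIsoFinOfCardEq ι rfl).symm i : ℕ) + 1
  have hp₀ : p₀ ∈ orderedConfigs ι :=
    ⟨fun i => by positivity, fun i l hil => by simpa [p₀] using hil⟩
  obtain ⟨δ, R, η, hδ, hη, hsub⟩ :=
    exists_gapBox_of_balanceEnergy_le (ι := ι) hk hc (balanceEnergy k c p₀)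
  have hKU := gapBox_subset_orderedConfigs (ι := ι) k (R := R) hδ hη
  exact exists_isMinOn_of_sublevel_subset_isCompact (isCompact_gapBox k δ R η) hKU
    (fun p hp => (continuousAt_balanceEnergy k c (hKU hp).1
      (pairwise_pow_ne_of_mem_orderedConfigs hk (hKU hp))).continuousWithinAt) hp₀ hsub

lemma balance_eq_zero_of_isMinOn [Fintype ι] {k : ℕ} (hk : k ≠ 0) (c : ℝ) {p : ι → ℝ}
    (hp : p ∈ orderedConfigs ι) (hmin : IsMinOn (balanceEnergy k c) (orderedConfigs ι) p)
    (j : ι) :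
    p j - c / (2 * p j) - ∑ l ∈ univ.erase j, k * p j ^ (k - 1) / (p j ^ k - p l ^ k) = 0 := by
  have hloc : IsLocalMin (balanceEnergy k c) (update p j (p j)) := by
    rw [update_eq_self]; exact hmin.isLocalMin (isOpen_orderedConfigs.mem_nhds hp)
  exact (hloc.comp_continuous (by fun_prop)).hasDerivAt_eq_zero
    (hasDerivAt_balanceEnergy_update k c (hp.1 j)
      fun l hl => pairwise_pow_ne_of_mem_orderedConfigs hk hp hl.symm)

end Ordered

theorem reduced_balance_equations_general (n k : ℕ) (hk : 2 ≤ k)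
    (ε₀ : ℝ) (hε₀ : ε₀ = -1 ∨ ε₀ = 0 ∨ ε₀ = 1) (hk4 : ε₀ = 1 → 4 ≤ k) :
    ∃ p : Fin n → ℝ, (∀ l, 0 < p l) ∧ StrictMono p ∧
      ∀ j : Fin n,
        p j - ((k : ℝ) - 1 - 2 * ε₀) / (2 * p j)
          - ∑ l ∈ Finset.univ.erase j,
              (k : ℝ) * p j ^ (k - 1) / (p j ^ k - p l ^ k) = 0 := by
  have hk0 : k ≠ 0 := by omega
  have hc : 0 < (k : ℝ) - 1 - 2 * ε₀ := by
    have hk2 : (2 : ℝ) ≤ k := by exact_mod_cast hk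
    rcases hε₀ with rfl | rfl | rfl
    · linarith
    · linarith
    · have : (4 : ℝ) ≤ k := by exact_mod_cast hk4 rfl
      linarith
  obtain ⟨p, hp, hmin⟩ := exists_isMinOn_balanceEnergy (ι := Fin n) hk0 hc
  exact ⟨p, hp.1, hp.2, balance_eq_zero_of_isMinOn hk0 _ hp hmin⟩

/-- (Reduced balance equations for all-negative dihedral configurations)
For integers `n ≥ 1`, `k ≥ 2` and `ε₀ ∈ {-1, 0, 1}` (with `k ≥ 4` when `ε₀ = 1`),
there exist `0 < p 1 < ⋯ < p n` solving, for every `j`,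
`p j - (k - 1 - 2ε₀)/(2 p j) - ∑_{l ≠ j} k p j^{k-1}/(p j^k - p l^k) = 0`. -/
theorem reduced_balance_equations (n k : ℕ) (hn : 1 ≤ n) (hk : 2 ≤ k)
    (ε₀ : ℝ) (hε₀ : ε₀ = -1 ∨ ε₀ = 0 ∨ ε₀ = 1) (hk4 : ε₀ = 1 → 4 ≤ k) :
    ∃ p : Fin n → ℝ, (∀ l, 0 < p l) ∧ StrictMono p ∧
      ∀ j : Fin n,
        p j - ((k : ℝ) - 1 - 2 * ε₀) / (2 * p j)
          - ∑ l ∈ Finset.univ.erase j,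
              (k : ℝ) * p j ^ (k - 1) / (p j ^ k - p l ^ k) = 0 :=
  reduced_balance_equations_general n k hk ε₀ hε₀ hk4
end
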